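/- For |q| < 1 and b a complex number with |b^{-1}q²| small enough that all series converge (e.g. b^{-2}q^{4m+4} ≠ 1 for all m ≥ 0 and |q| < 1), the identity ∑_{n≥0} q^{n²+n}/(b^{-1}q²;q²)_{n+1} = (∑_{ℓ≥0} q^{ℓ²+ℓ}) · ∏_{m≥0} 1/(1 - b^{-2}q^{4m+4}) + (b^{-1}q²/(1 - b^{-2}q⁴)) · ∑_{n≥0} q^{2n}/(b^{-2}q⁸;q⁴)_n holds, where (a;Q)_n := ∏_{j=0}^{n-1}(1 - a Q^j). -/

import Mathlib

/-!
Write `Q = q²`, `s = b⁻¹q²`, `ψ(Q) = ∑ Q^(n(n+1)/2)`, and `(a;q)_n`, `(a;q)_∞` for q-Pochhammer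
symbols. As functions of `s`, both `lhs Q s` and `rhs Q s = ψ(Q) / (s²;Q²)_∞ + s / (1 - s²) · R(s)`
(with `R = tailSeries Q`) satisfy `(1 - s²) X(s) = s + X(sQ)`: the left side by telescoping, the
right side because `(s²;Q²)_∞ = (1 - s²)((sQ)²;Q²)_∞` and `R(s) = 1 + Q / (1 - s²Q²) · R(sQ)`.
Along `s Q^N → 0` both tend to `ψ(Q)` (Tannery's theorem). So `D = lhs - rhs` satisfies
`D(s Q^N) = (s²;Q²)_N D(s) → (s²;Q²)_∞ D(s)`, which must vanish, and the infinite product is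
nonzero.
-/

open Filter Finset Topology

def qPochhammer (a q : ℂ) (n : ℕ) : ℂ := ∏ j ∈ range n, (1 - a * q ^ j)

noncomputable def qPochhammerInf (a q : ℂ) : ℂ := ∏' j : ℕ, (1 - a * q ^ j)

section qPochhammer

variable {a q : ℂ}

@[simp]
lemma qPochhammer_zero (a q : ℂ) : qPochhammer a q 0 = 1 :=
  prod_range_zero _

@[simp]
lemma qPochhammer_zero_left (q : ℂ) (n : ℕ) : qPochhammer 0 q n = 1 := by
  simp [qPochhammer]

lemma qPochhammer_succ (a q : ℂ) (n : ℕ) :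
    qPochhammer a q (n + 1) = qPochhammer a q n * (1 - a * q ^ n) :=
  prod_range_succ _ _

lemma qPochhammer_succ' (a q : ℂ) (n : ℕ) :
    qPochhammer a q (n + 1) = (1 - a) * qPochhammer (a * q) q n := by
  simp only [qPochhammer, prod_range_succ', pow_zero, mul_one, pow_succ', mul_assoc, mul_comm]

lemma qPochhammer_ne_zero (ha : ∀ j : ℕ, a * q ^ j ≠ 1) (n : ℕ) : qPochhammer a q n ≠ 0 :=
  prod_ne_zero_iff.2 fun j _ => sub_ne_zero.2 (ha j).symm

lemma summable_norm_mul_pow (a : ℂ) (hq : ‖q‖ < 1) : Summable fun j : ℕ => ‖a * q ^ j‖ := by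
  simpa [norm_mul, norm_pow] using
    (summable_geometric_of_lt_one (norm_nonneg q) hq).mul_left ‖a‖

lemma multipliable_one_sub_mul_pow (a : ℂ) (hq : ‖q‖ < 1) :
    Multipliable fun j : ℕ => 1 - a * q ^ j := by
  simpa [sub_eq_add_neg] using
    multipliable_one_add_of_summable (f := fun j : ℕ => -(a * q ^ j))
      (by simpa using summable_norm_mul_pow a hq)

lemma tendsto_qPochhammer (a : ℂ) (hq : ‖q‖ < 1) :
    Tendsto (qPochhammer a q) atTop (𝓝 (qPochhammerInf a q)) :=
  (multipliable_one_sub_mul_pow a hq).hasProd.tendsto_prod_nat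

lemma qPochhammerInf_ne_zero (hq : ‖q‖ < 1) (ha : ∀ j : ℕ, a * q ^ j ≠ 1) :
    qPochhammerInf a q ≠ 0 := by
  simpa [qPochhammerInf, sub_eq_add_neg] using
    tprod_one_add_ne_zero_of_summable (f := fun j : ℕ => -(a * q ^ j))
      (fun j => by simpa [← sub_eq_add_neg, sub_eq_zero] using (ha j).symm)
      (by simpa using summable_norm_mul_pow a hq)

lemma qPochhammer_mul_qPochhammerInf (a : ℂ) (hq : ‖q‖ < 1) (n : ℕ) :
    qPochhammer a q n * qPochhammerInf (a * q ^ n) q = qPochhammerInf a q := by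
  have hshift : (fun j => 1 - a * q ^ (j + n)) = fun j => 1 - a * q ^ n * q ^ j := by
    ext j; ring
  have := Multipliable.prod_mul_tprod_nat_mul' (f := fun j => 1 - a * q ^ j) (k := n)
    (by simpa only [hshift] using multipliable_one_sub_mul_pow (a * q ^ n) hq)
  rw [qPochhammer, qPochhammerInf, qPochhammerInf]
  simpa only [hshift] using this

lemma tendsto_qPochhammerInf_mul_pow (hq : ‖q‖ < 1) (ha : ∀ j : ℕ, a * q ^ j ≠ 1) :
    Tendsto (fun N => qPochhammerInf (a * q ^ N) q) atTop (𝓝 1) := by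
  have hL := qPochhammerInf_ne_zero hq ha
  have h := (tendsto_const_nhds (x := qPochhammerInf a q)).div (tendsto_qPochhammer a hq) hL
  rw [div_self hL] at h
  refine h.congr fun N => ?_
  show qPochhammerInf a q / qPochhammer a q N = _
  rw [← qPochhammer_mul_qPochhammerInf a hq N,
    mul_div_cancel_left₀ _ (qPochhammer_ne_zero ha N)]

lemma exists_norm_inv_qPochhammer_le (hq : ‖q‖ < 1) (ha : ∀ j : ℕ, a * q ^ j ≠ 1) :
    ∃ K, ∀ n, ‖(qPochhammer a q n)⁻¹‖ ≤ K := by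
  have h := (tendsto_qPochhammer a hq).inv₀ (qPochhammerInf_ne_zero hq ha)
  obtain ⟨K, hK⟩ := isBounded_iff_forall_norm_le.1 (Metric.isBounded_range_of_tendsto _ h)
  exact ⟨K, fun n => hK _ ⟨n, rfl⟩⟩

lemma summable_div_qPochhammer {c : ℕ → ℂ} (hc : Summable (‖c ·‖)) (hq : ‖q‖ < 1)
    (ha : ∀ j : ℕ, a * q ^ j ≠ 1) (m : ℕ → ℕ) :
    Summable fun n => c n / qPochhammer a q (m n) := by
  obtain ⟨K, hK⟩ := exists_norm_inv_qPochhammer_le hq ha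
  refine Summable.of_norm_bounded (hc.mul_right K) fun n => ?_
  rw [div_eq_mul_inv, norm_mul]
  exact mul_le_mul_of_nonneg_left (hK _) (norm_nonneg _)

lemma norm_qPochhammer_sub_one_le (a : ℂ) (hq : ‖q‖ < 1) (n : ℕ) :
    ‖qPochhammer a q n - 1‖ ≤ Real.exp (‖a‖ / (1 - ‖q‖)) - 1 := by
  have h := (range n).norm_prod_one_add_sub_one_le (fun j => -(a * q ^ j))
  simp only [← sub_eq_add_neg, norm_neg] at h
  refine h.trans (sub_le_sub_right (Real.exp_le_exp.2 ?_) 1)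
  calc ∑ j ∈ range n, ‖a * q ^ j‖ ≤ ∑' j, ‖a * q ^ j‖ :=
        (summable_norm_mul_pow a hq).sum_le_tsum _ fun _ _ => norm_nonneg _
    _ = ‖a‖ / (1 - ‖q‖) := by
        simp [norm_pow, tsum_mul_left, tsum_geometric_of_lt_one (norm_nonneg q) hq,
          div_eq_mul_inv]

lemma tendsto_tsum_div_qPochhammer {c : ℕ → ℂ} (hc : Summable (‖c ·‖)) (hq : ‖q‖ < 1)
    {a : ℕ → ℂ} (ha : Tendsto a atTop (𝓝 0)) (m : ℕ → ℕ) :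
    Tendsto (fun N => ∑' n, c n / qPochhammer (a N) q (m n)) atTop (𝓝 (∑' n, c n)) := by
  have hsmall : ∀ᶠ N in atTop, Real.exp (‖a N‖ / (1 - ‖q‖)) - 1 ≤ 1 / 2 := by
    have h : Tendsto (fun N => Real.exp (‖a N‖ / (1 - ‖q‖)) - 1) atTop (𝓝 0) := by
      simpa using ((ha.norm.div_const (1 - ‖q‖)).rexp).sub_const 1
    exact h.eventually_le_const (by norm_num)
  refine tendsto_tsum_of_dominated_convergence (hc.mul_left 2) (fun n => ?_) ?_
  · have hP : Continuous fun x => qPochhammer x q (m n) := by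
      unfold qPochhammer; fun_prop
    simpa [Pi.div_def, Function.comp_def] using
      tendsto_const_nhds.div ((hP.tendsto 0).comp ha) (by simp)
  · filter_upwards [hsmall] with N hN n
    have hP : 1 / 2 ≤ ‖qPochhammer (a N) q (m n)‖ := by
      have := norm_sub_norm_le (1 : ℂ) (1 - qPochhammer (a N) q (m n))
      rw [norm_sub_rev, sub_sub_cancel, norm_one] at this
      linarith [norm_qPochhammer_sub_one_le (a N) hq (m n)]
    rw [norm_div, div_le_iff₀ (by linarith)]
    nlinarith [norm_nonneg (c n)]

lemma eq_mul_qPochhammer_of_succ {d : ℕ → ℂ} (hd : ∀ N, d (N + 1) = (1 - a * q ^ N) * d N)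
    (N : ℕ) : d N = d 0 * qPochhammer a q N := by
  induction N with
  | zero => simp
  | succ N ih => rw [hd, ih, qPochhammer_succ]; ring

lemma eq_zero_of_succ_eq_of_tendsto_zero (hq : ‖q‖ < 1) (ha : ∀ j : ℕ, a * q ^ j ≠ 1)
    {d : ℕ → ℂ} (hd : ∀ N, d (N + 1) = (1 - a * q ^ N) * d N)
    (hlim : Tendsto d atTop (𝓝 0)) : d 0 = 0 := by
  have h : Tendsto d atTop (𝓝 (d 0 * qPochhammerInf a q)) := by
    simpa only [← eq_mul_qPochhammer_of_succ hd] using (tendsto_qPochhammer a hq).const_mul (d 0)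
  exact (mul_eq_zero.1 (tendsto_nhds_unique h hlim)).resolve_right (qPochhammerInf_ne_zero hq ha)

end qPochhammer

lemma Nat.le_mul_succ_div_two (n : ℕ) : n ≤ n * (n + 1) / 2 := by
  rw [Nat.le_div_iff_mul_le two_pos]
  rcases n with _ | n
  · simp
  · exact Nat.mul_le_mul_left _ (by omega)

lemma Nat.succ_mul_succ_succ_div_two (n : ℕ) :
    (n + 1) * (n + 2) / 2 = n * (n + 1) / 2 + (n + 1) := by
  rw [show (n + 1) * (n + 2) = n * (n + 1) + (n + 1) * 2 by ring,
    Nat.add_mul_div_right _ _ two_pos]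

lemma Nat.two_mul_mul_succ_div_two (n : ℕ) : 2 * (n * (n + 1) / 2) = n ^ 2 + n := by
  rw [Nat.mul_div_cancel' (Nat.even_mul_succ_self n).two_dvd]
  ring

namespace Fine

variable {Q s : ℂ}

noncomputable def ramanujanPsi (Q : ℂ) : ℂ := ∑' n : ℕ, Q ^ (n * (n + 1) / 2)

noncomputable def lhs (Q s : ℂ) : ℂ :=
  ∑' n : ℕ, Q ^ (n * (n + 1) / 2) / qPochhammer s Q (n + 1)

noncomputable def tailSeries (Q s : ℂ) : ℂ :=
  ∑' n : ℕ, Q ^ n / qPochhammer (s ^ 2 * Q ^ 2) (Q ^ 2) n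

noncomputable def rhs (Q s : ℂ) : ℂ :=
  ramanujanPsi Q * (qPochhammerInf (s ^ 2) (Q ^ 2))⁻¹ + s / (1 - s ^ 2) * tailSeries Q s

lemma summable_norm_pow_triangle (hQ : ‖Q‖ < 1) :
    Summable fun n : ℕ => ‖Q ^ (n * (n + 1) / 2)‖ := by
  refine (summable_geometric_of_lt_one (norm_nonneg Q) hQ).of_nonneg_of_le
    (fun _ => norm_nonneg _) fun n => ?_
  rw [norm_pow]
  exact pow_le_pow_of_le_one (norm_nonneg Q) hQ.le (Nat.le_mul_succ_div_two n)

lemma norm_sq_lt_one (hQ : ‖Q‖ < 1) : ‖Q ^ 2‖ < 1 := by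
  rw [norm_pow]
  exact pow_lt_one₀ (norm_nonneg Q) hQ two_ne_zero

lemma lhs_functional_eq (hQ : ‖Q‖ < 1) (hs : ∀ j : ℕ, s * Q ^ j ≠ 1) :
    (1 - s ^ 2) * lhs Q s = s + lhs Q (s * Q) := by
  have hsQ : ∀ j : ℕ, s * Q * Q ^ j ≠ 1 := fun j => by
    simpa [pow_succ', mul_assoc] using hs (j + 1)
  have hs0 : 1 - s ≠ 0 := sub_ne_zero.2 (by simpa using (hs 0).symm)
  set f : ℕ → ℂ := fun n => Q ^ (n * (n + 1) / 2) / qPochhammer (s * Q) Q n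
  set g : ℕ → ℂ := fun n => Q ^ (n * (n + 1) / 2) / qPochhammer (s * Q) Q (n + 1)
  have hf : Summable f :=
    summable_div_qPochhammer (summable_norm_pow_triangle hQ) hQ hsQ id
  have hg : Summable g :=
    summable_div_qPochhammer (summable_norm_pow_triangle hQ) hQ hsQ (· + 1)
  have hlhs : (1 - s) * lhs Q s = ∑' n, f n := by
    rw [lhs, ← tsum_mul_left]
    refine tsum_congr fun n => ?_
    rw [qPochhammer_succ', mul_div_assoc', mul_div_mul_left _ _ hs0]
  have hstep : ∀ n, g n - f n = s * f (n + 1) := fun n => by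
    have := qPochhammer_ne_zero hsQ n
    have := sub_ne_zero.2 (hsQ n).symm
    simp only [f, g, qPochhammer_succ, Nat.succ_mul_succ_succ_div_two, pow_add]
    field_simp
    ring
  have htele : lhs Q (s * Q) - ∑' n, f n = s * (∑' n, f n - 1) := by
    rw [lhs, ← hg.tsum_sub hf, tsum_congr hstep, tsum_mul_left, hf.tsum_eq_zero_add]
    simp [f]
  linear_combination (1 + s) * hlhs - htele

lemma tailSeries_functional_eq (hQ : ‖Q‖ < 1) (hs : ∀ m : ℕ, s ^ 2 * (Q ^ 2) ^ m ≠ 1) :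
    tailSeries Q s = 1 + Q / (1 - s ^ 2 * Q ^ 2) * tailSeries Q (s * Q) := by
  have hsQ : ∀ j : ℕ, s ^ 2 * Q ^ 2 * (Q ^ 2) ^ j ≠ 1 := fun j => by
    simpa [pow_succ', mul_assoc] using hs (j + 1)
  have hsum : Summable fun n : ℕ => Q ^ n / qPochhammer (s ^ 2 * Q ^ 2) (Q ^ 2) n :=
    summable_div_qPochhammer (by simpa using summable_geometric_of_lt_one (norm_nonneg Q) hQ)
      (norm_sq_lt_one hQ) hsQ id
  rw [tailSeries, hsum.tsum_eq_zero_add, tailSeries, ← tsum_mul_left, pow_zero, qPochhammer_zero,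
    div_one]
  congr 1
  refine tsum_congr fun n => ?_
  rw [div_mul_div_comm, ← pow_succ', qPochhammer_succ', mul_pow]

lemma qPochhammerInf_sq_eq (hQ : ‖Q‖ < 1) (s : ℂ) :
    qPochhammerInf (s ^ 2) (Q ^ 2) = (1 - s ^ 2) * qPochhammerInf ((s * Q) ^ 2) (Q ^ 2) := by
  simpa [qPochhammer, mul_pow] using
    (qPochhammer_mul_qPochhammerInf (s ^ 2) (norm_sq_lt_one hQ) 1).symm

lemma rhs_functional_eq (hQ : ‖Q‖ < 1) (hs : ∀ m : ℕ, s ^ 2 * (Q ^ 2) ^ m ≠ 1) :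
    (1 - s ^ 2) * rhs Q s = s + rhs Q (s * Q) := by
  have h0 : 1 - s ^ 2 ≠ 0 := sub_ne_zero.2 (by simpa using (hs 0).symm)
  rw [rhs, rhs, qPochhammerInf_sq_eq hQ s, tailSeries_functional_eq hQ hs]
  field_simp
  ring

lemma tendsto_mul_pow (hQ : ‖Q‖ < 1) (s : ℂ) : Tendsto (fun N => s * Q ^ N) atTop (𝓝 0) := by
  simpa using (tendsto_pow_atTop_nhds_zero_of_norm_lt_one hQ).const_mul s

lemma tendsto_lhs (hQ : ‖Q‖ < 1) (s : ℂ) :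
    Tendsto (fun N => lhs Q (s * Q ^ N)) atTop (𝓝 (ramanujanPsi Q)) :=
  tendsto_tsum_div_qPochhammer (summable_norm_pow_triangle hQ) hQ (tendsto_mul_pow hQ s) (· + 1)

lemma tendsto_rhs (hQ : ‖Q‖ < 1) (hs : ∀ m : ℕ, s ^ 2 * (Q ^ 2) ^ m ≠ 1) :
    Tendsto (fun N => rhs Q (s * Q ^ N)) atTop (𝓝 (ramanujanPsi Q)) := by
  have hsq : ∀ N : ℕ, (s * Q ^ N) ^ 2 = s ^ 2 * (Q ^ 2) ^ N := fun N => by ring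
  have hE := tendsto_qPochhammerInf_mul_pow (norm_sq_lt_one hQ) hs
  have hT : Tendsto (fun N => tailSeries Q (s * Q ^ N)) atTop (𝓝 (∑' n : ℕ, Q ^ n)) :=
    tendsto_tsum_div_qPochhammer (by simpa using summable_geometric_of_lt_one (norm_nonneg Q) hQ)
      (norm_sq_lt_one hQ) (by simpa using (tendsto_mul_pow hQ s).pow 2 |>.mul_const (Q ^ 2)) id
  have hsN := tendsto_mul_pow hQ s
  have := (tendsto_const_nhds (x := ramanujanPsi Q)).mul (hE.inv₀ one_ne_zero) |>.add
    ((hsN.div ((hsN.pow 2).const_sub 1) (by simp)).mul hT)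
  simpa [rhs, hsq] using this

lemma lhs_eq_rhs (hQ : ‖Q‖ < 1) (h1 : ∀ j : ℕ, s * Q ^ j ≠ 1)
    (h2 : ∀ m : ℕ, s ^ 2 * (Q ^ 2) ^ m ≠ 1) : lhs Q s = rhs Q s := by
  set d : ℕ → ℂ := fun N => lhs Q (s * Q ^ N) - rhs Q (s * Q ^ N)
  have hd : ∀ N, d (N + 1) = (1 - s ^ 2 * (Q ^ 2) ^ N) * d N := fun N => by
    have hl := lhs_functional_eq hQ (s := s * Q ^ N) fun j => by
      simpa [pow_add, mul_assoc] using h1 (N + j)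
    have hr := rhs_functional_eq hQ (s := s * Q ^ N) fun m => by
      convert h2 (N + m) using 1; ring
    simp only [d, pow_succ, ← mul_assoc]
    linear_combination hr - hl
  have hlim : Tendsto d atTop (𝓝 0) := by
    simpa using (tendsto_lhs hQ s).sub (tendsto_rhs hQ h2)
  simpa [d, sub_eq_zero] using
    eq_zero_of_succ_eq_of_tendsto_zero (norm_sq_lt_one hQ) h2 hd hlim

end Fine

open Fine in
theorem fine_transformation_general (q b : ℂ) (hq : ‖q‖ < 1)
    (hden1 : ∀ j : ℕ, b⁻¹ * q ^ (2 * j + 2) ≠ 1)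
    (hden2 : ∀ m : ℕ, b⁻¹ ^ 2 * q ^ (4 * m + 4) ≠ 1) :
    ∑' n : ℕ, q ^ (n ^ 2 + n) /
        ∏ j ∈ Finset.range (n + 1), (1 - b⁻¹ * q ^ 2 * q ^ (2 * j)) =
      (∑' l : ℕ, q ^ (l ^ 2 + l)) * ∏' m : ℕ, (1 - b⁻¹ ^ 2 * q ^ (4 * m + 4))⁻¹ +
        (b⁻¹ * q ^ 2 / (1 - b⁻¹ ^ 2 * q ^ 4)) *
          ∑' n : ℕ, q ^ (2 * n) /
            ∏ j ∈ Finset.range n, (1 - b⁻¹ ^ 2 * q ^ 8 * q ^ (4 * j)) := by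
  have hq4 : ‖(q ^ 2) ^ 2‖ < 1 := norm_sq_lt_one (norm_sq_lt_one hq)
  have h1 : ∀ j : ℕ, b⁻¹ * q ^ 2 * (q ^ 2) ^ j ≠ 1 := fun j => by
    convert hden1 j using 1; ring
  have h2 : ∀ m : ℕ, (b⁻¹ * q ^ 2) ^ 2 * ((q ^ 2) ^ 2) ^ m ≠ 1 := fun m => by
    convert hden2 m using 1; ring
  have hpow : ∀ n : ℕ, q ^ (n ^ 2 + n) = (q ^ 2) ^ (n * (n + 1) / 2) := fun n => by
    rw [← pow_mul, Nat.two_mul_mul_succ_div_two]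
  have hprod : ∏' m : ℕ, (1 - b⁻¹ ^ 2 * q ^ (4 * m + 4))⁻¹ =
      (qPochhammerInf ((b⁻¹ * q ^ 2) ^ 2) ((q ^ 2) ^ 2))⁻¹ := by
    rw [qPochhammerInf, ← (multipliable_one_sub_mul_pow _ hq4).tprod_inv₀
      (qPochhammerInf_ne_zero hq4 h2)]
    congr! 3 with m; ring
  have key := lhs_eq_rhs (norm_sq_lt_one hq) h1 h2
  simp only [lhs, rhs, ramanujanPsi, tailSeries, qPochhammer] at key
  simp only [hprod, hpow]
  convert key using 3 with n n
  · congr! 3 with j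
    ring
  · ring
  · refine tsum_congr fun n => ?_
    rw [pow_mul]
    congr! 3 with j
    ring

theorem fine_transformation (q b : ℂ) (hq : ‖q‖ < 1) (hb : b ≠ 0)
    (hden1 : ∀ j : ℕ, b⁻¹ * q ^ (2 * j + 2) ≠ 1)
    (hden2 : ∀ m : ℕ, b⁻¹ ^ 2 * q ^ (4 * m + 4) ≠ 1) :
    ∑' n : ℕ, q ^ (n ^ 2 + n) /
        ∏ j ∈ Finset.range (n + 1), (1 - b⁻¹ * q ^ 2 * q ^ (2 * j)) =
      (∑' l : ℕ, q ^ (l ^ 2 + l)) * ∏' m : ℕ, (1 - b⁻¹ ^ 2 * q ^ (4 * m + 4))⁻¹ +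
        (b⁻¹ * q ^ 2 / (1 - b⁻¹ ^ 2 * q ^ 4)) *
          ∑' n : ℕ, q ^ (2 * n) /
            ∏ j ∈ Finset.range n, (1 - b⁻¹ ^ 2 * q ^ 8 * q ^ (4 * j)) :=
  fine_transformation_general q b hq hden1 hden2
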